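/- The coverage probability function of the interval [L_S(Z),1] constructed from an ordered partition satisfies the 1−α level: for every Δ in [−1,1] and every p₀ in D(Δ), P_{(Δ,p₀)}(L_S(Z) ≤ Δ) ≥ 1−α. -/

import Mathlib

/-!
If `Δ < L_S` on some block, let `C_{j₀}` be the last such block. Every later block has
`L_S ≤ Δ`, so `S_{j₀}ᶜ ⊆ {L_S(Z) ≤ Δ}`; and since `Δ < sup G_z`, some element of `G_z` lies above
`Δ`, which gives `1 - α ≤ f_{j₀}(Δ) ≤ P(S_{j₀}ᶜ)`. If there is no such block, the event
`{L_S(Z) ≤ Δ}` is the whole sample space.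
-/

open Finset
open scoped Classical

noncomputable section

/-- Binomial probability mass function `P(X = x)` for `X ~ Bin(n, p)`. -/
def binomPMF (n : ℕ) (p : ℝ) (x : ℕ) : ℝ :=
  (n.choose x : ℝ) * p ^ x * (1 - p) ^ (n - x)

/-- Probability of a set `T` of sample points under independent `X ~ Bin(n,p₁)`, `Y ~ Bin(m,p₀)`. -/
def prob (n m : ℕ) (p₁ p₀ : ℝ) (T : Finset (ℕ × ℕ)) : ℝ :=
  ∑ z ∈ T, binomPMF n p₁ z.1 * binomPMF m p₀ z.2

/-- The range `D(Δ)` of the nuisance parameter `p₀`: `[0, 1-Δ]` if `Δ ≥ 0`, `[-Δ, 1]` if `Δ ≤ 0`. -/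
def Dset (Δ : ℝ) : Set ℝ :=
  {p₀ | 0 ≤ p₀ ∧ p₀ ≤ 1 ∧ 0 ≤ p₀ + Δ ∧ p₀ + Δ ≤ 1}

/-- The sample space `S = {(x,y) : 0 ≤ x ≤ n, 0 ≤ y ≤ m}`. -/
def sampleSpace (n m : ℕ) : Finset (ℕ × ℕ) :=
  Finset.range (n + 1) ×ˢ Finset.range (m + 1)

/-- `{C_j}` is an ordered partition of the sample space `S`. -/
def IsOrderedPartition (n m k₀ : ℕ) (C : Fin k₀ → Finset (ℕ × ℕ)) : Prop :=
  (∀ i j : Fin k₀, i ≠ j → Disjoint (C i) (C j)) ∧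
  Finset.univ.biUnion C = sampleSpace n m ∧
  ∀ j, (C j).Nonempty

/-- `S_jᶜ`, the complement in `S` of `S_j = ∪_{i ≤ j} C_i`. -/
def SjCompl (n m k₀ : ℕ) (C : Fin k₀ → Finset (ℕ × ℕ)) (j : Fin k₀) : Finset (ℕ × ℕ) :=
  (sampleSpace n m).filter (fun z => ¬ ∃ i, i ≤ j ∧ z ∈ C i)

/-- `f_j(Δ) = min_{p₀ ∈ D(Δ)} P_{(Δ,p₀)}(S_jᶜ)`. -/
def fj (n m k₀ : ℕ) (C : Fin k₀ → Finset (ℕ × ℕ)) (j : Fin k₀) (Δ : ℝ) : ℝ :=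
  sInf ((fun p₀ => prob n m (p₀ + Δ) p₀ (SjCompl n m k₀ C j)) '' Dset Δ)

/-- `G_z = {Δ ∈ [-1,1] : f_j(Δ') ≥ 1-α for all Δ' < Δ}` (for `z ∈ C_j`). -/
def Gj (n m k₀ : ℕ) (α : ℝ) (C : Fin k₀ → Finset (ℕ × ℕ)) (j : Fin k₀) : Set ℝ :=
  {Δ ∈ Set.Icc (-1 : ℝ) 1 | ∀ Δ' ∈ Set.Ico (-1 : ℝ) Δ, 1 - α ≤ fj n m k₀ C j Δ'}

/-- `L_S` on the block `C_j`: `sup G_z` if `G_z ≠ ∅`, and `-1` otherwise. -/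
def LSj (n m k₀ : ℕ) (α : ℝ) (C : Fin k₀ → Finset (ℕ × ℕ)) (j : Fin k₀) : ℝ :=
  if (Gj n m k₀ α C j).Nonempty then sSup (Gj n m k₀ α C j) else -1

lemma binomPMF_nonneg {n : ℕ} {p : ℝ} (hp : p ∈ Set.Icc (0 : ℝ) 1) (x : ℕ) :
    0 ≤ binomPMF n p x := by
  have := hp.1
  have : 0 ≤ 1 - p := sub_nonneg.mpr hp.2
  unfold binomPMF
  positivity

lemma sum_binomPMF (n : ℕ) (p : ℝ) : ∑ x ∈ range (n + 1), binomPMF n p x = 1 := by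
  rw [← one_pow (M := ℝ) n, ← add_sub_cancel p (1 : ℝ), add_pow]
  exact sum_congr rfl fun x _ => by rw [binomPMF]; ring

lemma prob_sampleSpace (n m : ℕ) (p₁ p₀ : ℝ) : prob n m p₁ p₀ (sampleSpace n m) = 1 := by
  simp only [prob, sampleSpace, sum_product, ← mul_sum, sum_binomPMF, mul_one]

section UnitInterval

variable {n m : ℕ} {p₁ p₀ : ℝ} (h₁ : p₁ ∈ Set.Icc (0 : ℝ) 1) (h₀ : p₀ ∈ Set.Icc (0 : ℝ) 1)
include h₁ h₀

lemma prob_nonneg (T : Finset (ℕ × ℕ)) : 0 ≤ prob n m p₁ p₀ T :=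
  sum_nonneg fun _ _ => mul_nonneg (binomPMF_nonneg h₁ _) (binomPMF_nonneg h₀ _)

lemma prob_mono {T T' : Finset (ℕ × ℕ)} (h : T ⊆ T') : prob n m p₁ p₀ T ≤ prob n m p₁ p₀ T' :=
  sum_le_sum_of_subset_of_nonneg h fun _ _ _ =>
    mul_nonneg (binomPMF_nonneg h₁ _) (binomPMF_nonneg h₀ _)

end UnitInterval

section Blocks

variable {n m k₀ : ℕ} {α Δ : ℝ} {C : Fin k₀ → Finset (ℕ × ℕ)} {j : Fin k₀}

lemma fj_le_prob {p₀ : ℝ} (hp₀ : p₀ ∈ Dset Δ) :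
    fj n m k₀ C j Δ ≤ prob n m (p₀ + Δ) p₀ (SjCompl n m k₀ C j) := by
  refine csInf_le ⟨0, ?_⟩ ⟨p₀, hp₀, rfl⟩
  rintro _ ⟨q, ⟨hq₀, hq₁, hqΔ₀, hqΔ₁⟩, rfl⟩
  exact prob_nonneg ⟨hqΔ₀, hqΔ₁⟩ ⟨hq₀, hq₁⟩ _

lemma neg_one_mem_Gj : -1 ∈ Gj n m k₀ α C j :=
  ⟨⟨le_rfl, by norm_num⟩, fun _ h => (h.2.not_ge h.1).elim⟩

lemma one_sub_le_fj_of_lt_LSj (hΔ : -1 ≤ Δ) (h : Δ < LSj n m k₀ α C j) :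
    1 - α ≤ fj n m k₀ C j Δ := by
  rw [LSj, if_pos ⟨-1, neg_one_mem_Gj⟩] at h
  obtain ⟨Δ₀, hΔ₀, hΔΔ₀⟩ := exists_lt_of_lt_csSup ⟨-1, neg_one_mem_Gj⟩ h
  exact hΔ₀.2 Δ ⟨hΔ, hΔΔ₀⟩

variable {L : ℕ × ℕ → ℝ} (hcover : univ.biUnion C = sampleSpace n m)
  (hL : ∀ i, ∀ z ∈ C i, L z = LSj n m k₀ α C i)
include hcover hL

lemma SjCompl_subset_filter_le (hj : ∀ i, j < i → LSj n m k₀ α C i ≤ Δ) :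
    SjCompl n m k₀ C j ⊆ (sampleSpace n m).filter (fun z => L z ≤ Δ) := by
  intro z hz
  obtain ⟨hzS, hz_notin⟩ := mem_filter.1 hz
  obtain ⟨i, -, hzi⟩ := mem_biUnion.1 (hcover ▸ hzS)
  have hji : j < i := not_le.1 fun hij => hz_notin ⟨i, hij, hzi⟩
  exact mem_filter.2 ⟨hzS, hL i z hzi ▸ hj i hji⟩

lemma filter_le_eq_sampleSpace (h : ∀ i, LSj n m k₀ α C i ≤ Δ) :
    (sampleSpace n m).filter (fun z => L z ≤ Δ) = sampleSpace n m := by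
  refine filter_true_of_mem fun z hzS => ?_
  obtain ⟨i, -, hzi⟩ := mem_biUnion.1 (hcover ▸ hzS)
  exact hL i z hzi ▸ h i

end Blocks

/-- The interval `[L_S(Z), 1]` constructed from an ordered partition has
coverage probability at least `1 - α`: for every `Δ ∈ [-1,1]` and every `p₀ ∈ D(Δ)`,
`P_{(Δ,p₀)}(L_S(Z) ≤ Δ) ≥ 1 - α`. -/
theorem smallest_interval_coverage
    (n m k₀ : ℕ) (α : ℝ) (hα : 0 ≤ α ∧ α < 1)
    (C : Fin k₀ → Finset (ℕ × ℕ)) (hC : IsOrderedPartition n m k₀ C)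
    (L : ℕ × ℕ → ℝ) (hL : ∀ j : Fin k₀, ∀ z ∈ C j, L z = LSj n m k₀ α C j) :
    ∀ Δ ∈ Set.Icc (-1 : ℝ) 1, ∀ p₀ ∈ Dset Δ,
      1 - α ≤ prob n m (p₀ + Δ) p₀ ((sampleSpace n m).filter (fun z => L z ≤ Δ)) := by
  intro Δ hΔ p₀ hp₀
  by_cases h : ∃ j, Δ < LSj n m k₀ α C j
  · obtain ⟨j₀, hj₀⟩ := (Set.toFinite {j | Δ < LSj n m k₀ α C j}).exists_maximal h
    have hlast : ∀ i, j₀ < i → LSj n m k₀ α C i ≤ Δ :=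
      fun i hi => not_lt.1 fun hΔi => hi.not_ge (hj₀.2 hΔi hi.le)
    calc 1 - α ≤ fj n m k₀ C j₀ Δ := one_sub_le_fj_of_lt_LSj hΔ.1 hj₀.1
      _ ≤ prob n m (p₀ + Δ) p₀ (SjCompl n m k₀ C j₀) := fj_le_prob hp₀
      _ ≤ _ := prob_mono ⟨hp₀.2.2.1, hp₀.2.2.2⟩ ⟨hp₀.1, hp₀.2.1⟩
          (SjCompl_subset_filter_le hC.2.1 hL hlast)
  · push Not at h
    rw [filter_le_eq_sampleSpace hC.2.1 hL h, prob_sampleSpace]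
    linarith [hα.1]
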